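/- arXiv:1809.04514 — 3 statements merged into one kernel-verified Lean document; each statement's English description precedes it below -/
import Mathlib

section
/- Let E1, …, E_{k-1} be self-adjoint d×d complex matrices and set E_k := I - E1 - … - E_{k-1}. Then {E1, …, E_k} is a POVM (i.e., E_i ≥ 0 for all i ∈ [k-1] and Σ_{i=1}^{k-1} E_i ≤ I) if and only if the polytope D_{jewel,k}(1) ⊆ ℝ^{k-1} with extreme points -(k/2)e_i (i ∈ [k-1]) and (k/2)(1,…,1) is contained in the set {x ∈ ℝ^{k-1} : Σ_{i=1}^{k-1} x_i (2E_i - (2/k)I) ≤ I}. -/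
open Matrix
open scoped ComplexOrder

/-- The matrix jewel base at level 1: the polytope in `ℝ^{k-1}` with extreme points
`-(k/2)eᵢ` for `i ∈ [k-1]` and `(k/2)(1,…,1)`. -/
def jewelBase (k : ℕ) : Set (Fin (k - 1) → ℝ) :=
  convexHull ℝ
    ((Set.range fun i : Fin (k - 1) =>
        (fun j => if j = i then -((k : ℝ) / 2) else 0 : Fin (k - 1) → ℝ))
      ∪ {fun _ => (k : ℝ) / 2})

/-!
The set of `x` with `∑ᵢ xᵢ (2Eᵢ - (2/k)I) ≤ I` is the preimage of the convex cone of positive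
semidefinite matrices under an affine map, hence convex, so it contains the polytope iff it contains
its vertices. At `-(k/2)eᵢ` the operator `I - ∑ᵢ xᵢ (2Eᵢ - (2/k)I)` equals `k Eᵢ`, and at
`(k/2)(1,…,1)` it equals `k (I - ∑ᵢ Eᵢ)`.
-/

namespace Matrix

variable {ι n : Type*}

theorem convex_setOf_posSemidef {𝕜 : Type*} [RCLike 𝕜] :
    Convex ℝ {A : Matrix n n 𝕜 | A.PosSemidef} :=
  fun _ hA _ hB _ _ hs ht _ => (hA.smul hs).add (hB.smul ht)

theorem posSemidef_nsmul_iff {𝕜 : Type*} [RCLike 𝕜] {A : Matrix n n 𝕜} {m : ℕ} (hm : m ≠ 0) :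
    (m • A).PosSemidef ↔ A.PosSemidef := by
  refine ⟨fun h => ?_, fun h => h.smul (Nat.zero_le m)⟩
  have := h.smul (inv_nonneg.mpr (Nat.cast_nonneg (α := ℝ) m))
  rwa [← Nat.cast_smul_eq_nsmul ℝ, smul_smul, inv_mul_cancel₀ (by exact_mod_cast hm),
    one_smul] at this

variable [Fintype ι]

theorem convex_setOf_posSemidef_sub_sum (A : Matrix n n ℂ) (M : ι → Matrix n n ℂ) :
    Convex ℝ {x : ι → ℝ | (A - ∑ i, (x i : ℂ) • M i).PosSemidef} := by
  have : {x : ι → ℝ | (A - ∑ i, (x i : ℂ) • M i).PosSemidef} =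
      (AffineMap.const ℝ (ι → ℝ) A - (Fintype.linearCombination ℝ M).toAffineMap) ⁻¹'
        {B | B.PosSemidef} := by
    ext x
    simp [Fintype.linearCombination_apply, Complex.coe_smul]
  rw [this]
  exact convex_setOf_posSemidef.affine_preimage _

variable [DecidableEq n]

theorem one_sub_sum_smul_at_neg_half_single [DecidableEq ι] {k : ℕ} (hk : k ≠ 0)
    (E : ι → Matrix n n ℂ) (i : ι) :
    1 - ∑ j, (((if j = i then -((k : ℝ) / 2) else 0 : ℝ)) : ℂ) •
        ((2 : ℂ) • E j - ((2 : ℂ) / k) • 1) = k • E i := by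
  have hk' : (k : ℂ) ≠ 0 := Nat.cast_ne_zero.mpr hk
  rw [Fintype.sum_eq_single i fun j hj => by simp [hj], if_pos rfl, ← Nat.cast_smul_eq_nsmul ℂ]
  push_cast
  match_scalars <;> field_simp; ring

theorem one_sub_sum_smul_at_half_const {k : ℕ} (hk : Fintype.card ι + 1 = k)
    (E : ι → Matrix n n ℂ) :
    1 - ∑ j, (((k : ℝ) / 2 : ℝ) : ℂ) • ((2 : ℂ) • E j - ((2 : ℂ) / k) • 1) =
      k • (1 - ∑ j, E j) := by
  have hk' : (k : ℂ) ≠ 0 := Nat.cast_ne_zero.mpr (by omega)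
  simp only [← Finset.smul_sum, Finset.sum_sub_distrib, Finset.sum_const, Finset.card_univ,
    ← Nat.cast_smul_eq_nsmul ℂ, ← hk]
  push_cast
  match_scalars <;> field_simp; ring

end Matrix

theorem stmt_4_general {d k : ℕ} (hk : 2 ≤ k)
    (E : Fin (k - 1) → Matrix (Fin d) (Fin d) ℂ) :
    ((∀ i, (E i).PosSemidef) ∧ ((1 : Matrix (Fin d) (Fin d) ℂ) - ∑ i, E i).PosSemidef)
      ↔ jewelBase k ⊆
          {x : Fin (k - 1) → ℝ |
            ((1 : Matrix (Fin d) (Fin d) ℂ)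
              - ∑ i, (x i : ℂ) • ((2 : ℂ) • E i - ((2 : ℂ) / k) • 1)).PosSemidef} := by
  have hk0 : k ≠ 0 := by omega
  have hcard : Fintype.card (Fin (k - 1)) + 1 = k := by rw [Fintype.card_fin]; omega
  rw [jewelBase, (convex_setOf_posSemidef_sub_sum _ _).convexHull_subset_iff,
    Set.union_subset_iff, Set.range_subset_iff, Set.singleton_subset_iff]
  simp only [Set.mem_ofPred_eq, one_sub_sum_smul_at_neg_half_single hk0,
    one_sub_sum_smul_at_half_const hcard, posSemidef_nsmul_iff hk0]

/-- For self-adjoint `E₁, …, E_{k-1}` with `E_k := I - E₁ - … - E_{k-1}`, the family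
`{E₁, …, E_k}` is a POVM iff the jewel base polytope is contained in
`{x : ∑ᵢ xᵢ (2Eᵢ - (2/k)I) ≤ I}`. -/
theorem stmt_4 {d k : ℕ} (hk : 2 ≤ k)
    (E : Fin (k - 1) → Matrix (Fin d) (Fin d) ℂ) (hE : ∀ i, (E i).IsHermitian) :
    ((∀ i, (E i).PosSemidef) ∧ ((1 : Matrix (Fin d) (Fin d) ℂ) - ∑ i, E i).PosSemidef)
      ↔ jewelBase k ⊆
          {x : Fin (k - 1) → ℝ |
            ((1 : Matrix (Fin d) (Fin d) ℂ)
              - ∑ i, (x i : ℂ) • ((2 : ℂ) • E i - ((2 : ℂ) / k) • 1)).PosSemidef} :=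
  stmt_4_general hk E
end

section
/- Let k = (k_1, …, k_g) be a tuple of positive integers and k_max = max_i k_i. Then Γ^{lin}(g, k_max·d, (k_max,…,k_max)) ⊆ Γ(g, d, k). That is, if s ∈ [0,1]^g belongs to the linear compatibility region for g POVMs in dimension k_max·d with k_max outcomes each, then for any g POVMs E^{(i)} on ℂ^d with k_i outcomes, the POVMs s_i E^{(i)} + (1-s_i)I/k_i are jointly measurable. -/
/-!
Pad each POVM `E` with `k i` outcomes by zero effects to `K = max k` outcomes, and dilate each
effect `E v` to the block-diagonal operator on `ℂ^d ⊗ ℂ^K` whose first `k i` blocks are the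
cyclic shifts `E (v + a)` and whose other `K - k i` blocks are `I / k i`. This is again a POVM,
and every dilated effect has trace `K d / k i`, so the trace-proportional noise on `ℂ^{Kd}`
restricts to exactly the uniform noise `I / k i`. Compressing a joint measurement of the noisy
dilations to the first block, where the dilation of `E v` reads `E v`, and discarding the
padded outcomes gives a joint measurement of the noisy `E`.
-/

open Matrix
open scoped ComplexOrder

/-- A family `E` of POVMs on `ℂ^d` (the `i`-th having `k i` outcomes) is jointly
measurable if there is a joint POVM `G` indexed by outcome tuples whose marginals
are the `E i`. -/
def JointlyMeasurable {d g : ℕ} (k : Fin g → ℕ)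
    (E : ∀ i : Fin g, Fin (k i) → Matrix (Fin d) (Fin d) ℂ) : Prop :=
  ∃ G : (∀ i : Fin g, Fin (k i)) → Matrix (Fin d) (Fin d) ℂ,
    (∀ η, (G η).PosSemidef) ∧ (∑ η, G η = 1) ∧
      ∀ (u : Fin g) (v : Fin (k u)),
        E u v = ∑ η ∈ Finset.univ.filter (fun η : ∀ i : Fin g, Fin (k i) => η u = v), G η

open Function Finset

theorem Matrix.PosSemidef.blockDiagonal {n o : Type*} [Fintype n] [DecidableEq n] [Fintype o]
    [DecidableEq o] {M : o → Matrix n n ℂ} (hM : ∀ b, (M b).PosSemidef) :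
    (blockDiagonal M).PosSemidef := by
  open scoped MatrixOrder in
  choose A hA using fun b => CStarAlgebra.nonneg_iff_eq_star_mul_self.mp (hM b).nonneg
  have : Matrix.blockDiagonal M = (Matrix.blockDiagonal A)ᴴ * Matrix.blockDiagonal A := by
    rw [blockDiagonal_conjTranspose, ← blockDiagonal_mul]
    exact congrArg _ (funext hA)
  exact this ▸ posSemidef_conjTranspose_mul_self _

theorem Matrix.trace_submatrix_equiv {m n R : Type*} [Fintype m] [Fintype n] [AddCommMonoid R]
    (M : Matrix n n R) (e : m ≃ n) : (M.submatrix e e).trace = M.trace :=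
  e.sum_comp fun i => M i i

theorem Matrix.sum_submatrix {ι l m n o R : Type*} [AddCommMonoid R] (s : Finset ι)
    (M : ι → Matrix m n R) (f : l → m) (g : o → n) :
    ∑ j ∈ s, (M j).submatrix f g = (∑ j ∈ s, M j).submatrix f g := by
  ext
  simp [Matrix.sum_apply]

section POVM

variable {ι n : Type*} [Fintype ι] [DecidableEq n]

def IsPOVM (E : ι → Matrix n n ℂ) : Prop :=
  (∀ j, (E j).PosSemidef) ∧ ∑ j, E j = 1

theorem IsPOVM.submatrix_equiv {m : Type*} [DecidableEq m] {E : ι → Matrix n n ℂ}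
    (hE : IsPOVM E) (e : m ≃ n) : IsPOVM fun j => (E j).submatrix e e :=
  ⟨fun j => (hE.1 j).submatrix e, by rw [sum_submatrix, hE.2, submatrix_one_equiv]⟩

theorem IsPOVM.extend {κ : Type*} [Fintype κ] {E : ι → Matrix n n ℂ} (hE : IsPOVM E)
    {f : ι → κ} (hf : Injective f) : IsPOVM (Function.extend f E 0) := by
  classical
  refine ⟨fun c => ?_, ?_⟩
  · by_cases hc : ∃ a, f a = c
    · obtain ⟨a, rfl⟩ := hc
      simpa [hf.extend_apply] using hE.1 a
    · simpa [extend_apply' _ _ _ hc] using PosSemidef.zero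
  · rw [← hE.2, ← sum_subset (subset_univ (univ.map ⟨f, hf⟩)), sum_map]
    · exact sum_congr rfl fun a _ => hf.extend_apply E 0 a
    · intro c _ hc
      refine extend_apply' _ _ _ fun ⟨a, ha⟩ => hc ?_
      simp [← ha]

noncomputable def linearNoise [Fintype n] (s : ℝ) (X : Matrix n n ℂ) : Matrix n n ℂ :=
  (s : ℂ) • X + (((1 - s : ℝ) : ℂ) * X.trace / Fintype.card n) • 1

@[simp]
theorem linearNoise_zero [Fintype n] (s : ℝ) : linearNoise s (0 : Matrix n n ℂ) = 0 := by
  simp [linearNoise]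

end POVM

section CyclicDilation

variable {α n : Type*} [AddGroup α] [Fintype α] [DecidableEq α] [DecidableEq n]
  (β : Type*) [DecidableEq β]

noncomputable def cyclicDilation (E : α → Matrix n n ℂ) (v : α) :
    Matrix (n × (α ⊕ β)) (n × (α ⊕ β)) ℂ :=
  blockDiagonal (Sum.elim (fun a => E (v + a)) fun _ => (Fintype.card α : ℝ)⁻¹ • 1)

variable {β} {E : α → Matrix n n ℂ}

theorem isPOVM_cyclicDilation [Fintype n] [Fintype β] (hE : IsPOVM E) :
    IsPOVM (cyclicDilation β E) := by
  refine ⟨fun v => PosSemidef.blockDiagonal fun b => ?_, ?_⟩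
  · cases b with
    | inl a => exact hE.1 (v + a)
    | inr _ => exact PosSemidef.one.smul (by positivity)
  · rw [← blockDiagonal_one]
    refine (map_sum (blockDiagonalAddMonoidHom n n (α ⊕ β) ℂ) _ univ).symm.trans
      (congrArg _ (funext fun b => ?_))
    rw [Finset.sum_apply]
    cases b with
    | inl a => exact (Equiv.sum_comp (Equiv.addRight a) E).trans hE.2
    | inr _ =>
      have hα : (Fintype.card α : ℝ) ≠ 0 := Nat.cast_ne_zero.mpr Fintype.card_ne_zero
      simp only [Sum.elim_inr, sum_const, card_univ, ← Nat.cast_smul_eq_nsmul ℝ, smul_smul,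
        mul_inv_cancel₀ hα, one_smul, Pi.one_apply]

theorem trace_cyclicDilation [Fintype n] [Fintype β] (hE : IsPOVM E) (v : α) :
    (cyclicDilation β E v).trace = Fintype.card (n × (α ⊕ β)) / Fintype.card α := by
  have hα : (Fintype.card α : ℂ) ≠ 0 := Nat.cast_ne_zero.mpr Fintype.card_ne_zero
  have hshift : ∑ a, (E (v + a)).trace = Fintype.card n := by
    rw [← trace_sum, ← trace_one, ← hE.2]
    exact congrArg trace (Equiv.sum_comp (Equiv.addLeft v) E)
  simp only [cyclicDilation, trace_blockDiagonal, Fintype.sum_sum_type, Sum.elim_inl,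
    Sum.elim_inr, hshift, trace_smul, trace_one, sum_const, card_univ, Fintype.card_prod,
    Fintype.card_sum, Complex.real_smul]
  rw [Complex.ofReal_inv, Complex.ofReal_natCast, nsmul_eq_mul]
  field_simp
  push_cast
  ring

theorem cyclicDilation_submatrix_inl_zero (v : α) :
    (cyclicDilation β E v).submatrix (·, .inl 0) (·, .inl 0) = E v := by
  ext
  simp [cyclicDilation]

theorem submatrix_linearNoise_cyclicDilation [Fintype n] [Nonempty n] [Fintype β] {m : Type*}
    [Fintype m] [DecidableEq m] (hE : IsPOVM E) (e : n × (α ⊕ β) ≃ m) {f : n → m}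
    (hf : ∀ x, e (x, .inl 0) = f x) (s : ℝ) (v : α) :
    (linearNoise s ((cyclicDilation β E v).submatrix e.symm e.symm)).submatrix f f
      = (s : ℂ) • E v + (((1 - s) / Fintype.card α : ℝ) : ℂ) • 1 := by
  have hf_inj : Injective f := fun x y hxy => by
    simpa [← hf] using hxy
  have he_f : e.symm ∘ f = (·, .inl 0) := funext fun x => e.symm_apply_eq.mpr (hf x).symm
  have hcard : (Fintype.card (n × (α ⊕ β)) : ℂ) ≠ 0 :=
    Nat.cast_ne_zero.mpr Fintype.card_ne_zero
  simp only [linearNoise, submatrix_add, submatrix_smul, Pi.add_apply, Pi.smul_apply,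
    submatrix_submatrix, he_f, cyclicDilation_submatrix_inl_zero, submatrix_one f hf_inj,
    trace_submatrix_equiv, trace_cyclicDilation hE, ← Fintype.card_congr e]
  congr 3
  push_cast
  field_simp

end CyclicDilation

namespace JointlyMeasurable

variable {d g : ℕ} {k : Fin g → ℕ}
  {E : ∀ i : Fin g, Fin (k i) → Matrix (Fin d) (Fin d) ℂ}

theorem submatrix (hE : JointlyMeasurable k E) {d' : ℕ} {f : Fin d' → Fin d}
    (hf : Injective f) : JointlyMeasurable k fun i j => (E i j).submatrix f f := by
  obtain ⟨G, hG_psd, hG_sum, hG_marg⟩ := hE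
  refine ⟨fun η => (G η).submatrix f f, fun η => (hG_psd η).submatrix f, ?_, fun u v => ?_⟩
  · rw [sum_submatrix, hG_sum, submatrix_one f hf]
  · rw [sum_submatrix, ← hG_marg]

theorem coarseGrain (hE : JointlyMeasurable k E) {k' : Fin g → ℕ}
    (φ : ∀ i, Fin (k i) → Fin (k' i)) :
    JointlyMeasurable k' fun i v => ∑ j with φ i j = v, E i j := by
  obtain ⟨G, hG_psd, hG_sum, hG_marg⟩ := hE
  let push : (∀ i, Fin (k i)) → ∀ i, Fin (k' i) := fun η i => φ i (η i)
  refine ⟨fun η' => ∑ η with push η = η', G η,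
    fun η' => posSemidef_sum _ fun η _ => hG_psd η, ?_, fun u v => ?_⟩
  · rw [sum_fiberwise, hG_sum]
  · simp_rw [hG_marg u]
    rw [sum_fiberwise_eq_sum_filter, sum_fiberwise_eq_sum_filter]
    simp [push]

theorem of_extend [∀ i, Nonempty (Fin (k i))] {k' : Fin g → ℕ}
    {ι : ∀ i, Fin (k i) → Fin (k' i)} (hι : ∀ i, Injective (ι i))
    (h : JointlyMeasurable k' fun i => extend (ι i) (E i) 0) : JointlyMeasurable k E := by
  convert h.coarseGrain fun i => invFun (ι i) with i v
  rw [sum_eq_single_of_mem (ι i v) (by simp [leftInverse_invFun (hι i) v]),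
    (hι i).extend_apply]
  intro j hj hjv
  refine extend_apply' _ _ _ fun ⟨w, hw⟩ => hjv ?_
  rw [← hw, ← (mem_filter.mp hj).2, ← hw, leftInverse_invFun (hι i) w]

end JointlyMeasurable

def finBlockEquiv (d : ℕ) {kk K : ℕ} (h : kk ≤ K) :
    Fin d × (Fin kk ⊕ Fin (K - kk)) ≃ Fin (K * d) :=
  (Equiv.prodComm _ _).trans
    (((finSumFinEquiv.trans (finCongr (Nat.add_sub_cancel' h))).prodCongr (.refl _)).trans
      finProdFinEquiv)

theorem finBlockEquiv_inl_zero {d kk K : ℕ} [NeZero kk] (h : kk ≤ K) (hdK : d ≤ K * d)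
    (x : Fin d) : finBlockEquiv d h (x, .inl 0) = Fin.castLE hdK x := by
  ext
  simp [finBlockEquiv, finProdFinEquiv]

theorem stmt_8_general {d g : ℕ} (k : Fin g → ℕ) (hk : ∀ i, 0 < k i)
    (s : Fin g → ℝ)
    (h : ∀ E : Fin g → Fin (Finset.univ.sup k) →
          Matrix (Fin (Finset.univ.sup k * d)) (Fin (Finset.univ.sup k * d)) ℂ,
      (∀ i, (∀ j, (E i j).PosSemidef) ∧ ∑ j, E i j = 1) →
      JointlyMeasurable (fun _ : Fin g => Finset.univ.sup k)
        (fun i j => (s i : ℂ) • E i j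
          + ((((1 - s i : ℝ)) : ℂ) * (E i j).trace / ((Finset.univ.sup k * d : ℕ) : ℂ)) • 1)) :
    ∀ E : ∀ i : Fin g, Fin (k i) → Matrix (Fin d) (Fin d) ℂ,
      (∀ i, (∀ j, (E i j).PosSemidef) ∧ ∑ j, E i j = 1) →
      JointlyMeasurable k
        (fun i j => (s i : ℂ) • E i j + (((1 - s i) / (k i) : ℝ) : ℂ) • 1) := by
  intro E hE
  obtain rfl | hg := g.eq_zero_or_pos
  · exact ⟨fun _ => 1, fun _ => .one, Fintype.sum_unique _, fun u => u.elim0⟩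
  obtain rfl | hd := d.eq_zero_or_pos
  · exact ⟨fun _ => 1, fun _ => .one, Subsingleton.elim _ _, fun _ _ => Subsingleton.elim _ _⟩
  have : NeZero d := ⟨hd.ne'⟩
  have : ∀ i, NeZero (k i) := fun i => ⟨(hk i).ne'⟩
  set K := univ.sup k
  have hkK : ∀ i, k i ≤ K := fun i => le_sup (mem_univ i)
  have hdK : d ≤ K * d := Nat.le_mul_of_pos_left d ((hk ⟨0, hg⟩).trans_le (hkK _))
  let e i := finBlockEquiv d (hkK i)
  let F i := extend (Fin.castLE (hkK i))
    (fun v => (cyclicDilation (Fin (K - k i)) (E i) v).submatrix (e i).symm (e i).symm) 0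
  have hF : ∀ i, IsPOVM (F i) := fun i =>
    ((isPOVM_cyclicDilation (hE i)).submatrix_equiv (e i).symm).extend (Fin.castLE_injective _)
  have hJ : JointlyMeasurable (fun _ => K) fun i j =>
      (linearNoise (s i) (F i j)).submatrix (Fin.castLE hdK) (Fin.castLE hdK) := by
    simpa only [linearNoise, Fintype.card_fin] using (h F hF).submatrix (Fin.castLE_injective hdK)
  refine .of_extend (fun i => Fin.castLE_injective (hkK i)) ?_
  convert hJ using 3 with i j
  rw [apply_extend fun X => (linearNoise (s i) X).submatrix (Fin.castLE hdK) (Fin.castLE hdK)]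
  congr 1
  · funext v
    simpa using (submatrix_linearNoise_cyclicDilation (hE i) (e i) (finBlockEquiv_inl_zero _ hdK)
      (s i) v).symm
  · funext
    simp

/-- `Γ^{lin}(g, k_max·d, (k_max,…,k_max)) ⊆ Γ(g, d, k)`: if `s` belongs to the linear
compatibility region for `g` POVMs in dimension `k_max·d` with `k_max` outcomes each,
then for any `g` POVMs `E⁽ⁱ⁾` on `ℂ^d` with `kᵢ` outcomes, the noisy POVMs
`sᵢE⁽ⁱ⁾ + (1-sᵢ)I/kᵢ` are jointly measurable. -/
theorem stmt_8 {d g : ℕ} (k : Fin g → ℕ) (hk : ∀ i, 0 < k i)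
    (s : Fin g → ℝ) (hs : ∀ i, s i ∈ Set.Icc (0 : ℝ) 1)
    (h : ∀ E : Fin g → Fin (Finset.univ.sup k) →
          Matrix (Fin (Finset.univ.sup k * d)) (Fin (Finset.univ.sup k * d)) ℂ,
      (∀ i, (∀ j, (E i j).PosSemidef) ∧ ∑ j, E i j = 1) →
      JointlyMeasurable (fun _ : Fin g => Finset.univ.sup k)
        (fun i j => (s i : ℂ) • E i j
          + ((((1 - s i : ℝ)) : ℂ) * (E i j).trace / ((Finset.univ.sup k * d : ℕ) : ℂ)) • 1)) :
    ∀ E : ∀ i : Fin g, Fin (k i) → Matrix (Fin d) (Fin d) ℂ,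
      (∀ i, (∀ j, (E i j).PosSemidef) ∧ ∑ j, E i j = 1) →
      JointlyMeasurable k
        (fun i j => (s i : ℂ) • E i j + (((1 - s i) / (k i) : ℝ) : ℂ) • 1) :=
  stmt_8_general k hk s h
end

section
/- Let g ≥ 1 and define the planar qubit observables X_j = cos(jπ/g)σ_X + sin(jπ/g)σ_Y for j ∈ [g], where σ_X, σ_Y are Pauli matrices. Then for λ ∈ ℝ, the tuple (λX_1, …, λX_g) satisfies all the inequalities Σ_{j=1}^g ε_j λ X_j ≤ I_2 for every ε ∈ {±1}^g if and only if |λ| ≤ sin(π/(2g)). -/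
/-!
Writing `pauliXY z = (re z) σ_X + (im z) σ_Y = !![0, z̄; z, 0]`, which is `ℝ`-linear in `z`, we get
`∑ⱼ εⱼ λ Xⱼ = pauliXY (λ S_ε)` with `S_ε = ∑ⱼ εⱼ ω^(j+1)`, `ω = exp(iπ/g)`, and
`1 - pauliXY z` is positive semidefinite iff `‖z‖ ≤ 1`: its determinant is `1 - ‖z‖²`, and
conversely, for `z = ‖z‖ u` with `‖u‖ = 1`, it equals `(1 - ‖z‖) • 1 + ‖z‖ • v v*` with
`v = (1, -u)`.
So the condition reads `|λ| ‖S_ε‖ ≤ 1` for all sign vectors `ε`.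

For `ε = 1`, `S` is a geometric sum with `ω^g = -1`, whence `‖S‖ = 2 / ‖ω - 1‖ = 1 / sin(π/2g)`.
For arbitrary `ε`, rotating `S_ε` onto the positive real axis gives
`‖S_ε‖ ≤ ∑ⱼ |cos((j+1)π/g - φ)|` for some `φ`. Each summand times `2 sin(π/2g)` is
`|sin(x + π/2g) - sin(x - π/2g)| ≤ ∫ |cos|` over an interval of length `π/g`, and these intervals
tile an interval of length `π`, on which `∫ |cos| = 2`.
-/

open Matrix
open scoped ComplexOrder

noncomputable def sigmaX : Matrix (Fin 2) (Fin 2) ℂ := !![0, 1; 1, 0]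

noncomputable def sigmaY : Matrix (Fin 2) (Fin 2) ℂ := !![0, -Complex.I; Complex.I, 0]

/-- The planar qubit observable `X_j = cos(jπ/g)σ_X + sin(jπ/g)σ_Y`, for `j ∈ [g]`
(here `j : Fin g` represents the integer `j+1 ∈ {1,…,g}`). -/
noncomputable def planarX (g : ℕ) (j : Fin g) : Matrix (Fin 2) (Fin 2) ℂ :=
  (Real.cos (((j : ℕ) + 1) * Real.pi / g) : ℂ) • sigmaX
    + (Real.sin (((j : ℕ) + 1) * Real.pi / g) : ℂ) • sigmaY

section Trigonometric

open Real

lemma integral_abs_cos_eq_two (c : ℝ) : ∫ x in c..c + π, |cos x| = 2 := by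
  have hperiodic : Function.Periodic (fun x => |cos x|) π := fun x => by
    simp [cos_antiperiodic x]
  rw [hperiodic.intervalIntegral_add_eq c (-(π / 2)), show -(π / 2) + π = π / 2 by ring,
    intervalIntegral.integral_congr (g := cos) fun x hx => abs_of_nonneg <|
      cos_nonneg_of_mem_Icc <| by rwa [Set.uIcc_of_le (by linarith [pi_pos])] at hx,
    integral_cos]
  norm_num

lemma abs_cos_mul_two_sin_le_integral {d : ℝ} (hd₀ : 0 ≤ d) (hdπ : d ≤ π) (x : ℝ) :
    |cos x| * (2 * sin d) ≤ ∫ t in x - d..x + d, |cos t| := by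
  have hsin : sin (x + d) - sin (x - d) = 2 * sin d * cos x := by
    rw [sin_sub_sin]; ring_nf
  calc |cos x| * (2 * sin d) = |sin (x + d) - sin (x - d)| := by
        rw [hsin, abs_mul, abs_of_nonneg (by linarith [sin_nonneg_of_nonneg_of_le_pi hd₀ hdπ] :
          0 ≤ 2 * sin d), mul_comm]
    _ = |∫ t in x - d..x + d, cos t| := by rw [integral_cos]
    _ ≤ ∫ t in x - d..x + d, |cos t| :=
        intervalIntegral.abs_integral_le_integral_abs (by linarith)

lemma sum_abs_cos_mul_two_sin_le_integral {d : ℝ} (hd₀ : 0 ≤ d) (hdπ : d ≤ π) (x : ℝ) (n : ℕ) :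
    (∑ j ∈ Finset.range n, |cos (x + 2 * j * d)|) * (2 * sin d)
      ≤ ∫ t in x - d..x - d + 2 * n * d, |cos t| := by
  let a : ℕ → ℝ := fun k => x - d + 2 * k * d
  calc (∑ j ∈ Finset.range n, |cos (x + 2 * j * d)|) * (2 * sin d)
      ≤ ∑ j ∈ Finset.range n, ∫ t in a j..a (j + 1), |cos t| := by
        rw [Finset.sum_mul]
        refine Finset.sum_le_sum fun j _ => ?_
        have h := abs_cos_mul_two_sin_le_integral hd₀ hdπ (x + 2 * j * d)
        rwa [show x + 2 * j * d - d = a j by ring,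
          show x + 2 * j * d + d = a (j + 1) by simp only [a]; push_cast; ring] at h
    _ = ∫ t in a 0..a n, |cos t| :=
        intervalIntegral.sum_integral_adjacent_intervals fun _ _ =>
          continuous_cos.abs.intervalIntegrable _ _
    _ = ∫ t in x - d..x - d + 2 * n * d, |cos t| := by simp only [a]; simp

lemma sin_pi_div_two_mul_pos {g : ℕ} (hg : 1 ≤ g) : 0 < sin (π / (2 * g)) := by
  have hg₀ : (0 : ℝ) < g := by exact_mod_cast hg
  exact sin_pos_of_pos_of_lt_pi (by positivity) (div_lt_self pi_pos (by norm_cast; omega))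

lemma sum_abs_cos_le {g : ℕ} (hg : 1 ≤ g) (φ : ℝ) :
    ∑ j : Fin g, |cos (((j : ℕ) + 1) * π / g - φ)| ≤ (sin (π / (2 * g)))⁻¹ := by
  have hg₀ : (0 : ℝ) < g := by exact_mod_cast hg
  have hd₀ : 0 ≤ π / (2 * g) := by positivity
  have hdπ : π / (2 * g) ≤ π := div_le_self pi_pos.le (by norm_cast; omega)
  have hsin := sin_pi_div_two_mul_pos hg
  have key := sum_abs_cos_mul_two_sin_le_integral hd₀ hdπ (π / g - φ) g
  rw [show π / g - φ - π / (2 * g) + 2 * g * (π / (2 * g)) = π / g - φ - π / (2 * g) + π by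
    field_simp, integral_abs_cos_eq_two] at key
  have hterm : ∀ j : ℕ, π / g - φ + 2 * j * (π / (2 * g)) = (j + 1) * π / g - φ := fun j => by
    field_simp; ring
  simp only [hterm] at key
  rw [Fin.sum_univ_eq_sum_range (fun j => |cos ((j + 1) * π / g - φ)|), ← one_div,
    le_div_iff₀ hsin]
  linarith

end Trigonometric

open Complex ComplexConjugate

lemma norm_eq_re_exp_neg_arg_mul (z : ℂ) : ‖z‖ = (exp (-(arg z * I)) * z).re := by
  set a := arg z
  nth_rewrite 2 [← norm_mul_exp_arg_mul_I z]
  rw [mul_left_comm, ← exp_add, neg_add_cancel, exp_zero, mul_one, ofReal_re]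

lemma norm_sum_ofReal_mul_le {ι : Type*} (s : Finset ι) (ε : ι → ℝ) (w : ι → ℂ)
    (hε : ∀ i ∈ s, |ε i| ≤ 1) {B : ℝ} (hB : ∀ φ : ℝ, ∑ i ∈ s, |(exp (-(φ * I)) * w i).re| ≤ B) :
    ‖∑ i ∈ s, (ε i : ℂ) * w i‖ ≤ B := by
  set φ := arg (∑ i ∈ s, (ε i : ℂ) * w i)
  calc ‖∑ i ∈ s, (ε i : ℂ) * w i‖
      = ∑ i ∈ s, ε i * (exp (-(φ * I)) * w i).re := by
        rw [norm_eq_re_exp_neg_arg_mul, Finset.mul_sum, re_sum]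
        refine Finset.sum_congr rfl fun i _ => ?_
        rw [mul_left_comm, re_ofReal_mul]
    _ ≤ ∑ i ∈ s, |(exp (-(φ * I)) * w i).re| := Finset.sum_le_sum fun i hi =>
        (le_abs_self _).trans <| by
          rw [abs_mul]; exact mul_le_of_le_one_left (abs_nonneg _) (hε i hi)
    _ ≤ B := hB φ

lemma norm_sum_pow_succ_of_pow_eq_neg_one {ζ : ℂ} (hζ : ‖ζ‖ = 1) {n : ℕ} (hn : ζ ^ n = -1) :
    ‖∑ j ∈ Finset.range n, ζ ^ (j + 1)‖ = 2 / ‖ζ - 1‖ := by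
  have hζ₁ : ζ ≠ 1 := by
    rintro rfl
    norm_num at hn
  simp_rw [pow_succ', ← Finset.mul_sum, geom_sum_eq hζ₁, hn]
  rw [norm_mul, norm_div, hζ, one_mul]
  norm_num

noncomputable def pauliXY : ℂ →ₗ[ℝ] Matrix (Fin 2) (Fin 2) ℂ where
  toFun z := (z.re : ℂ) • sigmaX + (z.im : ℂ) • sigmaY
  map_add' z w := by simp only [add_re, add_im, ofReal_add, add_smul]; abel
  map_smul' c z := by
    simp only [smul_re, smul_im, smul_eq_mul, ofReal_mul, mul_smul, RingHom.id_apply, smul_add]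
    rfl

lemma pauliXY_eq (z : ℂ) : pauliXY z = !![0, star z; z, 0] := by
  ext i j
  fin_cases i <;> fin_cases j <;>
    simp [pauliXY, sigmaX, sigmaY, Complex.ext_iff]

lemma posSemidef_one_sub_pauliXY_iff (z : ℂ) : (1 - pauliXY z).PosSemidef ↔ ‖z‖ ≤ 1 := by
  have hM : 1 - pauliXY z = !![1, -star z; -z, 1] := by
    rw [pauliXY_eq]; ext i j; fin_cases i <;> fin_cases j <;> simp
  rw [hM]
  constructor
  · intro h
    have hdet : (!![1, -star z; -z, 1] : Matrix (Fin 2) (Fin 2) ℂ).det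
        = ((1 - ‖z‖ ^ 2 : ℝ) : ℂ) := by
      rw [det_fin_two_of, neg_mul_neg, star_def, conj_mul']
      push_cast; ring
    have := h.det_nonneg
    rw [hdet, zero_le_real] at this
    nlinarith [norm_nonneg z]
  · intro h
    set u := exp (arg z * I)
    have hz : (‖z‖ : ℂ) * u = z := norm_mul_exp_arg_mul_I z
    have hu : u * conj u = 1 := by
      rw [mul_conj, normSq_eq_norm_sq, norm_exp_ofReal_mul_I]; simp
    have hdecomp : !![1, -star z; -z, 1] = ((1 - ‖z‖ : ℝ) : ℂ) • (1 : Matrix (Fin 2) (Fin 2) ℂ)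
        + (‖z‖ : ℂ) • vecMulVec ![1, -u] (star ![1, -u]) := by
      set r := ‖z‖
      rw [← hz]
      ext i j; simp only [Matrix.add_apply, Matrix.smul_apply, vecMulVec_apply]
      fin_cases i <;> fin_cases j <;> simp [hu]
    rw [hdecomp]
    exact (PosSemidef.one.smul (zero_le_real.mpr (by linarith))).add
      ((posSemidef_vecMulVec_self_star _).smul (zero_le_real.mpr (norm_nonneg z)))

noncomputable def planarPhase (g : ℕ) (j : Fin g) : ℂ :=
  exp (↑(((j : ℕ) + 1) * Real.pi / g) * I)

lemma planarX_eq_pauliXY (g : ℕ) (j : Fin g) : planarX g j = pauliXY (planarPhase g j) := by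
  simp only [planarX, pauliXY, planarPhase, LinearMap.coe_mk, AddHom.coe_mk,
    exp_ofReal_mul_I_re, exp_ofReal_mul_I_im]

lemma norm_sum_planarPhase {g : ℕ} (hg : 1 ≤ g) :
    ‖∑ j, planarPhase g j‖ = (Real.sin (Real.pi / (2 * g)))⁻¹ := by
  set ζ := exp (I * ↑(Real.pi / g))
  have hg₀ : (g : ℂ) ≠ 0 := by norm_cast; omega
  have hphase : ∀ j : Fin g, planarPhase g j = ζ ^ ((j : ℕ) + 1) := fun j => by
    rw [planarPhase, ← exp_nat_mul]
    congr 1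
    push_cast
    ring
  have hζg : ζ ^ g = -1 := by
    rw [← exp_nat_mul, show (g : ℂ) * (I * ↑(Real.pi / g)) = Real.pi * I by push_cast; field_simp,
      exp_pi_mul_I]
  rw [Finset.sum_congr rfl fun j _ => hphase j, Fin.sum_univ_eq_sum_range (fun j => ζ ^ (j + 1)),
    norm_sum_pow_succ_of_pow_eq_neg_one (norm_exp_I_mul_ofReal _) hζg,
    norm_exp_I_mul_ofReal_sub_one, div_div, mul_comm (g : ℝ) 2, norm_mul, Real.norm_two,
    Real.norm_of_nonneg (sin_pi_div_two_mul_pos hg).le]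
  field_simp

lemma norm_sum_mul_planarPhase_le {g : ℕ} (hg : 1 ≤ g) (ε : Fin g → ℝ) (hε : ∀ j, |ε j| ≤ 1) :
    ‖∑ j, (ε j : ℂ) * planarPhase g j‖ ≤ (Real.sin (Real.pi / (2 * g)))⁻¹ := by
  refine norm_sum_ofReal_mul_le _ ε _ (fun j _ => hε j) fun φ => ?_
  convert sum_abs_cos_le hg φ using 3 with j
  rw [planarPhase, ← exp_add, ← neg_mul, ← add_mul, ← ofReal_neg, ← ofReal_add,
    exp_ofReal_mul_I_re, neg_add_eq_sub]

lemma one_sub_sum_smul_planarX_posSemidef_iff (g : ℕ) (c : Fin g → ℝ) :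
    (1 - ∑ j, (c j : ℂ) • planarX g j).PosSemidef ↔ ‖∑ j, (c j : ℂ) * planarPhase g j‖ ≤ 1 := by
  have h : ∑ j, (c j : ℂ) • planarX g j = pauliXY (∑ j, (c j : ℂ) * planarPhase g j) := by
    rw [map_sum]
    refine Finset.sum_congr rfl fun j _ => ?_
    rw [planarX_eq_pauliXY, ← real_smul, map_smul]
    exact (RCLike.real_smul_eq_coe_smul (K := ℂ) _ _).symm
  rw [h, posSemidef_one_sub_pauliXY_iff]

/-- `(λX_1, …, λX_g)` satisfies all the matrix inequalities `∑ⱼ εⱼ λ Xⱼ ≤ I₂` for all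
sign vectors `ε ∈ {±1}^g` iff `|λ| ≤ sin(π/(2g))`. -/
theorem stmt_14 (g : ℕ) (hg : 1 ≤ g) (lam : ℝ) :
    (∀ ε : Fin g → ℝ, (∀ j, ε j = 1 ∨ ε j = -1) →
      ((1 : Matrix (Fin 2) (Fin 2) ℂ) - ∑ j, ((ε j * lam : ℝ) : ℂ) • planarX g j).PosSemidef)
      ↔ |lam| ≤ Real.sin (Real.pi / (2 * g)) := by
  have hsin := sin_pi_div_two_mul_pos hg
  have hnorm : ∀ ε : Fin g → ℝ,
      ‖∑ j, ((ε j * lam : ℝ) : ℂ) * planarPhase g j‖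
        = |lam| * ‖∑ j, (ε j : ℂ) * planarPhase g j‖ := by
    intro ε
    rw [← Real.norm_eq_abs, ← norm_real, ← norm_mul, Finset.mul_sum]
    simp only [ofReal_mul, mul_right_comm, mul_comm (lam : ℂ)]
  simp only [one_sub_sum_smul_planarX_posSemidef_iff, hnorm]
  constructor
  · intro h
    have hones := h 1 fun _ => Or.inl rfl
    simp only [Pi.one_apply, ofReal_one, one_mul, norm_sum_planarPhase hg] at hones
    rwa [← div_eq_mul_inv, div_le_one hsin] at hones
  · intro h ε hε
    calc |lam| * ‖∑ j, (ε j : ℂ) * planarPhase g j‖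
        ≤ Real.sin (Real.pi / (2 * g)) * (Real.sin (Real.pi / (2 * g)))⁻¹ :=
          mul_le_mul h (norm_sum_mul_planarPhase_le hg ε fun j => by
            rcases hε j with h | h <;> simp [h]) (norm_nonneg _) hsin.le
      _ = 1 := mul_inv_cancel₀ hsin.ne'
end
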